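/- Let d ≥ 2 and let α, β be ℤ₂-(d−1)-cochains on the d-dimensional hypercube. For 1 ≤ i ≤ d and ε ∈ {+,−}, write î_ε for the (d−1)-cell whose i-th entry is ε and whose other entries are all •. Then (α ∪_{d−2} β)(•,…,•) = Σ_{1 ≤ i < j ≤ d} [ α(î_{ε(i+1)}) β(ĵ_{ε(j+1)}) + β(î_{ε(i)}) α(ĵ_{ε(j)}) ], where ε(t) denotes + if t is even and − if t is odd. -/

import Mathlib

/-- The three possible entries of a cell label of the hypercube:
`dot` = `•` (a spanned direction), `pls` = `+`, `mns` = `−`. -/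
inductive Sgn : Type
  | dot : Sgn
  | pls : Sgn
  | mns : Sgn
  deriving DecidableEq

instance instFintypeSgn : Fintype Sgn :=
  ⟨{Sgn.dot, Sgn.pls, Sgn.mns}, fun x => by cases x <;> simp⟩

/-- A cell of the `d`-dimensional hypercube, labeled by a tuple in `{•,+,−}^d`. -/
abbrev Cell (d : ℕ) := Fin d → Sgn

/-- A `ℤ₂`-cochain on the `d`-dimensional hypercube. -/
abbrev Cochain (d : ℕ) := Cell d → ZMod 2

/-- The top cell `(•,…,•)`. -/
def topCell (d : ℕ) : Cell d := fun _ => Sgn.dot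

/-- The set of coordinates of a cell labeled `•`. -/
def dots {d : ℕ} (w : Cell d) : Finset (Fin d) :=
  Finset.univ.filter (fun j => w j = Sgn.dot)

/-- The coboundary of a `ℤ₂`-cochain: `(δα)(w)` is the sum of `α` over all cells obtained
from `w` by replacing exactly one entry equal to `•` by `+` or by `−`. -/
def delta {d : ℕ} (α : Cochain d) : Cochain d := fun w =>
  ∑ j ∈ dots w, (α (Function.update w j Sgn.pls) + α (Function.update w j Sgn.mns))

/-- The set of coordinates where both `z` and `z'` are `•`. -/
def bothDot {d : ℕ} (z z' : Cell d) : Finset (Fin d) :=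
  Finset.univ.filter (fun j => z j = Sgn.dot ∧ z' j = Sgn.dot)

/-- The allowed values of `(z_j, z'_j)` at a coordinate `j` not in the common-`•` set `I`:
`(+,•)` or `(•,−)` when `ℓ(j) = #{i ∈ I : i < j}` is even, and `(−,•)` or `(•,+)` when it
is odd. -/
def pairCond {d : ℕ} (I : Finset (Fin d)) (j : Fin d) (a b : Sgn) : Prop :=
  if (I.filter (fun i => i < j)).card % 2 = 0 then
    (a = Sgn.pls ∧ b = Sgn.dot) ∨ (a = Sgn.dot ∧ b = Sgn.mns)
  else
    (a = Sgn.mns ∧ b = Sgn.dot) ∨ (a = Sgn.dot ∧ b = Sgn.pls)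

/-- The pairs `(z,z')` appearing in the `m`-th higher cup product evaluated on the cell `w`:
the entries of `w` equal to `+` or `−` are fixed in both arguments, there are exactly `m`
coordinates where both `z` and `z'` are `•`, and at the remaining `•`-coordinates of `w`
the parity condition `pairCond` holds. -/
def IntPair {d : ℕ} (m : ℕ) (w z z' : Cell d) : Prop :=
  (∀ j, w j ≠ Sgn.dot → z j = w j ∧ z' j = w j) ∧
    (bothDot z z').card = m ∧
    ∀ j, w j = Sgn.dot → j ∉ bothDot z z' → pairCond (bothDot z z') j (z j) (z' j)

open Classical in
/-- The finite set of pairs in `Int_m` relative to the cell `w`. -/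
noncomputable def intPairs {d : ℕ} (m : ℕ) (w : Cell d) : Finset (Cell d × Cell d) :=
  Finset.univ.filter (fun p => IntPair m w p.1 p.2)

/-- The higher cup product `α ∪_m β` of `ℤ₂`-cochains:
`(α ∪_m β)(w) = Σ_{(z,z') ∈ Int_m(w)} α(z)·β(z')`. -/
noncomputable def cup {d : ℕ} (m : ℕ) (α β : Cochain d) : Cochain d := fun w =>
  ∑ p ∈ intPairs m w, α p.1 * β p.2

/-- The `(d−1)`-cell `î_s` whose `i`-th entry is `s` and whose other entries are all `•`. -/
def hatCell {d : ℕ} (i : Fin d) (s : Sgn) : Cell d := fun j => if j = i then s else Sgn.dot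

/-- `ε(t)`: the sign `+` if `t` is even and `−` if `t` is odd. -/
def eps (t : ℕ) : Sgn := if t % 2 = 0 then Sgn.pls else Sgn.mns

/-- `α` is a `p`-cochain: it vanishes on all cells that are not `p`-cells. -/
def IsCochainOfDeg {d : ℕ} (p : ℕ) (α : Cochain d) : Prop :=
  ∀ w : Cell d, (dots w).card ≠ p → α w = 0

/-- The indicator cochain of a cell: value `1` on that cell and `0` elsewhere. -/
def indicator {d : ℕ} (c : Cell d) : Cochain d := fun w => if w = c then 1 else 0

/-!
Since `α` and `β` vanish off `(d-1)`-cells, only pairs `(î_s, ĵ_t)` of `(d-1)`-cells contribute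
to `(α ∪_{d-2} β)(•,…,•)`. Such a pair lies in `Int_{d-2}` only if `i ≠ j`; the common `•`-set
is then everything but `i, j`, and the parity condition at `i` and at `j` fixes both signs.
With `0`-based indices, for `i < j` one has `ℓ(i) = i`, `ℓ(j) = j - 1`, forcing `s = ε(i)`,
`t = ε(j)`; for `i > j`, `ℓ(i) = i - 1`, `ℓ(j) = j`, forcing `s = ε(i + 1)`, `t = ε(j + 1)`.
Pairing the term for `(i, j)` with the one for `(j, i)` gives the formula.
-/

section HatCells

open Finset

variable {d : ℕ}

def Sgn.signs : Finset Sgn := {Sgn.pls, Sgn.mns}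

lemma Sgn.mem_signs {s : Sgn} : s ∈ Sgn.signs ↔ s ≠ Sgn.dot := by
  cases s <;> simp [Sgn.signs]

lemma eps_mem_signs (t : ℕ) : eps t ∈ Sgn.signs := by
  unfold eps; split <;> simp [Sgn.signs]

lemma eps_add_two (t : ℕ) : eps (t + 2) = eps t := by
  simp [eps, Nat.add_mod_right]

lemma hatCell_inj {a b : Fin d} {s t : Sgn} (hs : s ≠ Sgn.dot) :
    hatCell a s = hatCell b t ↔ a = b ∧ s = t := by
  refine ⟨fun h => ?_, fun ⟨rfl, rfl⟩ => rfl⟩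
  have hab : a = b := by
    by_contra hab
    exact hs (by simpa [hatCell, hab] using congrFun h a)
  subst hab
  simpa [hatCell] using congrFun h a

lemma eq_hatCell_of_card_dots (hd : 0 < d) {z : Cell d} (hz : (dots z).card = d - 1) :
    ∃ a, z a ≠ Sgn.dot ∧ z = hatCell a (z a) := by
  have hcard : (dots z)ᶜ.card = 1 := by
    rw [card_compl, hz, Fintype.card_fin]; omega
  obtain ⟨a, ha⟩ := card_eq_one.mp hcard
  have hnd : ∀ k, z k ≠ Sgn.dot ↔ k = a := fun k => by
    simpa [dots] using congrArg (k ∈ ·) ha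
  refine ⟨a, (hnd a).2 rfl, funext fun k => ?_⟩
  by_cases hk : k = a
  · subst hk; simp [hatCell]
  · simpa [hatCell, hk] using mt (hnd k).1 hk

lemma sum_eq_sum_hatCell {M : Type*} [AddCommMonoid M] (hd : 0 < d) (g : Cell d → M)
    (hg : ∀ z, (dots z).card ≠ d - 1 → g z = 0) :
    ∑ z, g z = ∑ a, ∑ s ∈ Sgn.signs, g (hatCell a s) := by
  have hinj : Set.InjOn (fun p : Fin d × Sgn => hatCell p.1 p.2)
      ↑((univ : Finset (Fin d)) ×ˢ Sgn.signs) := by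
    rintro ⟨a, s⟩ hs ⟨b, t⟩ - h
    have hs : s ≠ Sgn.dot := Sgn.mem_signs.1 (mem_product.1 hs).2
    obtain ⟨rfl, rfl⟩ := (hatCell_inj hs).1 h
    rfl
  rw [← sum_product', ← sum_image hinj]
  refine (sum_subset (subset_univ _) fun z _ hz => hg z fun hcard => hz ?_).symm
  obtain ⟨a, ha, hza⟩ := eq_hatCell_of_card_dots hd hcard
  exact mem_image.2 ⟨(a, z a), mem_product.2 ⟨mem_univ a, Sgn.mem_signs.2 ha⟩, hza.symm⟩

open Classical in
lemma cup_eq_sum_ite (m : ℕ) (α β : Cochain d) (w : Cell d) :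
    cup m α β w = ∑ z, ∑ z', if IntPair m w z z' then α z * β z' else 0 := by
  rw [cup, intPairs, sum_filter, ← Fintype.sum_prod_type']

open Classical in
lemma cup_eq_sum_hatCell (hd : 0 < d) {α β : Cochain d} (hα : IsCochainOfDeg (d - 1) α)
    (hβ : IsCochainOfDeg (d - 1) β) (m : ℕ) (w : Cell d) :
    cup m α β w = ∑ a, ∑ s ∈ Sgn.signs, ∑ b, ∑ t ∈ Sgn.signs,
      if IntPair m w (hatCell a s) (hatCell b t) then α (hatCell a s) * β (hatCell b t) else 0 := by
  rw [cup_eq_sum_ite, sum_eq_sum_hatCell hd _ fun z hz => sum_eq_zero fun z' _ => by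
    simp [hα z hz]]
  refine sum_congr rfl fun a _ => sum_congr rfl fun s _ => ?_
  exact sum_eq_sum_hatCell hd _ fun z' hz' => by simp [hβ z' hz']

lemma pairCond_dot_right {I : Finset (Fin d)} {k : Fin d} {x : Sgn} :
    pairCond I k x Sgn.dot ↔ x = eps (I.filter (· < k)).card := by
  unfold pairCond eps; split <;> simp

lemma pairCond_dot_left {I : Finset (Fin d)} {k : Fin d} {y : Sgn} :
    pairCond I k Sgn.dot y ↔ y = eps ((I.filter (· < k)).card + 1) := by
  unfold pairCond eps; split <;> simp_all [Nat.succ_mod_two_eq_zero_iff]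

lemma not_pairCond {I : Finset (Fin d)} {k : Fin d} {x y : Sgn} (hx : x ≠ Sgn.dot)
    (hy : y ≠ Sgn.dot) : ¬ pairCond I k x y := by
  unfold pairCond; split <;> simp [hx, hy]

lemma bothDot_hatCell {a b : Fin d} {s t : Sgn} (hs : s ≠ Sgn.dot) (ht : t ≠ Sgn.dot) :
    bothDot (hatCell a s) (hatCell b t) = {a, b}ᶜ := by
  ext k
  by_cases hka : k = a <;> by_cases hkb : k = b <;> simp [bothDot, hatCell, hka, hkb, hs, ht]

lemma card_filter_lt_of_lt {a b : Fin d} (h : a < b) :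
    (({a, b}ᶜ : Finset (Fin d)).filter (· < a)).card = a := by
  rw [← Fin.card_Iio a]
  congr 1
  ext k
  simp only [mem_filter, mem_compl, mem_insert, mem_singleton, mem_Iio]
  grind

lemma card_filter_lt_of_gt {a b : Fin d} (h : b < a) :
    (({a, b}ᶜ : Finset (Fin d)).filter (· < a)).card = a - 1 := by
  rw [← Fin.card_Iio a, ← card_erase_of_mem (mem_Iio.2 h)]
  congr 1
  ext k
  simp only [mem_filter, mem_compl, mem_insert, mem_singleton, mem_Iio, mem_erase]
  grind

lemma intPair_top_hatCell_iff_pairCond {a b : Fin d} (hab : a ≠ b) {s t : Sgn}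
    (hs : s ≠ Sgn.dot) (ht : t ≠ Sgn.dot) :
    IntPair (d - 2) (topCell d) (hatCell a s) (hatCell b t) ↔
      pairCond {a, b}ᶜ a s Sgn.dot ∧ pairCond {a, b}ᶜ b Sgn.dot t := by
  have hcard : ({a, b}ᶜ : Finset (Fin d)).card = d - 2 := by
    rw [card_compl, card_pair hab, Fintype.card_fin]
  simp only [IntPair, bothDot_hatCell hs ht, hcard, topCell, mem_compl, mem_insert, mem_singleton,
    not_not, forall_eq_or_imp, forall_eq, true_and, ne_eq, not_true_eq_false, false_imp_iff,
    implies_true, forall_const]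
  simp [hatCell, hab, Ne.symm hab]

lemma intPair_top_hatCell_iff {a b : Fin d} {s t : Sgn} (hs : s ≠ Sgn.dot) (ht : t ≠ Sgn.dot) :
    IntPair (d - 2) (topCell d) (hatCell a s) (hatCell b t) ↔
      (a < b ∧ s = eps a ∧ t = eps b) ∨ (b < a ∧ s = eps (a + 1) ∧ t = eps (b + 1)) := by
  by_cases hab : a = b
  · subst hab
    simp only [lt_irrefl, false_and, or_self, iff_false]
    rintro ⟨-, -, h⟩
    have ha : a ∉ bothDot (hatCell a s) (hatCell a t) := by simp [bothDot_hatCell hs ht]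
    exact not_pairCond hs ht (by simpa [hatCell] using h a rfl ha)
  rw [intPair_top_hatCell_iff_pairCond hab hs ht, pairCond_dot_right, pairCond_dot_left]
  rcases lt_or_gt_of_ne hab with h | h
  · rw [card_filter_lt_of_lt h, pair_comm, card_filter_lt_of_gt h, Nat.sub_add_cancel (by omega)]
    simp [h, not_lt_of_gt h]
  · rw [card_filter_lt_of_gt h, pair_comm, card_filter_lt_of_lt h, ← eps_add_two (a - 1),
      show (a : ℕ) - 1 + 2 = a + 1 by omega]
    simp [h, not_lt_of_gt h]

open Classical in
lemma sum_signs_intPair_top {M : Type*} [AddCommMonoid M] (a b : Fin d)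
    (F : Cell d → Cell d → M) :
    ∑ s ∈ Sgn.signs, ∑ t ∈ Sgn.signs,
      (if IntPair (d - 2) (topCell d) (hatCell a s) (hatCell b t) then
        F (hatCell a s) (hatCell b t) else 0) =
      if a < b then F (hatCell a (eps a)) (hatCell b (eps b))
      else if b < a then F (hatCell a (eps (a + 1))) (hatCell b (eps (b + 1))) else 0 := by
  have hcond : ∀ s ∈ Sgn.signs, ∀ t ∈ Sgn.signs,
      IntPair (d - 2) (topCell d) (hatCell a s) (hatCell b t) ↔
        (a < b ∧ s = eps a ∧ t = eps b) ∨ (b < a ∧ s = eps (a + 1) ∧ t = eps (b + 1)) :=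
    fun s hs t ht => intPair_top_hatCell_iff (Sgn.mem_signs.1 hs) (Sgn.mem_signs.1 ht)
  rw [sum_congr rfl fun s hs => sum_congr rfl fun t ht => if_congr (hcond s hs t ht) rfl rfl]
  rcases lt_trichotomy a b with h | rfl | h
  · simp only [h, not_lt_of_gt h, true_and, false_and, or_false, if_true, ite_and, sum_ite_irrel,
      sum_const_zero, sum_ite_eq', eps_mem_signs]
  · simp
  · simp only [h, not_lt_of_gt h, true_and, false_and, false_or, if_true, if_false, ite_and,
      sum_ite_irrel, sum_const_zero, sum_ite_eq', eps_mem_signs]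

lemma sum_sum_ite_lt_ite_gt {ι M : Type*} [Fintype ι] [LinearOrder ι] [AddCommMonoid M]
    (f g : ι → ι → M) :
    ∑ a, ∑ b, (if a < b then f a b else if b < a then g a b else 0) =
      ∑ i, ∑ j, if i < j then f i j + g j i else 0 := by
  have hsplit : ∀ a b : ι, (if a < b then f a b else if b < a then g a b else 0) =
      (if a < b then f a b else 0) + (if b < a then g a b else 0) := fun a b => by
    rcases lt_trichotomy a b with h | rfl | h
    · simp [h, not_lt_of_gt h]
    · simp
    · simp [h, not_lt_of_gt h]
  simp only [hsplit, sum_add_distrib]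
  rw [sum_comm (f := fun a b => if b < a then g a b else 0), ← sum_add_distrib]
  refine sum_congr rfl fun i _ => ?_
  rw [← sum_add_distrib]
  exact sum_congr rfl fun j _ => by rw [ite_add_ite, add_zero]

end HatCells

/-- For `d ≥ 2` and `ℤ₂`-`(d−1)`-cochains `α`, `β` on the `d`-dimensional
hypercube (indices written `1`-based, so the `1`-based index of `i : Fin d` is `i.val + 1`):
`(α ∪_{d−2} β)(•,…,•) = Σ_{1 ≤ i < j ≤ d} [α(î_{ε(i+1)}) β(ĵ_{ε(j+1)}) + β(î_{ε(i)}) α(ĵ_{ε(j)})]`,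
where `ε(t)` is `+` if `t` is even and `−` if `t` is odd. -/
theorem cup_d_sub_two_formula (d : ℕ) (hd : 2 ≤ d) (α β : Cochain d)
    (hα : IsCochainOfDeg (d - 1) α) (hβ : IsCochainOfDeg (d - 1) β) :
    cup (d - 2) α β (topCell d) =
      ∑ i : Fin d, ∑ j : Fin d,
        if i < j then
          α (hatCell i (eps ((i.val + 1) + 1))) * β (hatCell j (eps ((j.val + 1) + 1)))
            + β (hatCell i (eps (i.val + 1))) * α (hatCell j (eps (j.val + 1)))
        else 0 := by
  rw [cup_eq_sum_hatCell (by omega) hα hβ]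
  calc _ = ∑ a : Fin d, ∑ b : Fin d,
        if a < b then α (hatCell a (eps a)) * β (hatCell b (eps b))
        else if b < a then α (hatCell a (eps (a + 1))) * β (hatCell b (eps (b + 1))) else 0 := by
        refine Finset.sum_congr rfl fun a _ => ?_
        rw [Finset.sum_comm]
        exact Finset.sum_congr rfl fun b _ => sum_signs_intPair_top a b (fun z z' => α z * β z')
    _ = _ := by
        rw [sum_sum_ite_lt_ite_gt]
        simp only [add_assoc, one_add_one_eq_two, eps_add_two]
        refine Finset.sum_congr rfl fun i _ => Finset.sum_congr rfl fun j _ => ?_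
        split_ifs <;> ring
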